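/- Let H be a finite-dimensional complex Hilbert space, ρ ∈ D(H), and let k, n be integers with 0 ≤ k ≤ n. For any ω ∈ D(H^{⊗k}), the symmetrised locally-defective state satisfies (1/n)·‖ (1/n!) Σ_{π∈S_n} U_π (ρ^{⊗(n−k)} ⊗ ω) U_π† − ρ^{⊗n} ‖_{W1} ≤ k/n, where U_π is the unitary permuting the tensor factors of H^{⊗n} according to π. -/

import Mathlib

open scoped BigOperators ComplexOrder
open Filter Matrix

noncomputable section

namespace AlmostIID

/-- The trace norm `‖A‖₁ = Tr √(A†A)` of a square complex matrix. -/
def traceNorm {m : Type*} [Fintype m] [DecidableEq m] (A : Matrix m m ℂ) : ℝ :=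
  (((Matrix.posSemidef_conjTranspose_mul_self A).1.eigenvectorUnitary.1 *
      Matrix.diagonal (((↑) : ℝ → ℂ) ∘ (√·) ∘ (Matrix.posSemidef_conjTranspose_mul_self A).1.eigenvalues) *
      (star (Matrix.posSemidef_conjTranspose_mul_self A).1.eigenvectorUnitary : Matrix m m ℂ)).trace).re

/-- A density matrix (state): positive semidefinite with unit trace. -/
def IsState {m : Type*} [Fintype m] (M : Matrix m m ℂ) : Prop :=
  M.PosSemidef ∧ M.trace = 1

/-- The marginal (reduced density matrix) of an `n`-partite operator on the
coordinates in `I`, i.e. the partial trace over the complement of `I`. -/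
def marginal {κ : Type*} [Fintype κ] {n : ℕ}
    (M : Matrix (Fin n → κ) (Fin n → κ) ℂ) (I : Finset (Fin n)) :
    Matrix ({i : Fin n // i ∈ I} → κ) ({i : Fin n // i ∈ I} → κ) ℂ :=
  fun a b => ∑ f : {i : Fin n // i ∉ I} → κ,
    M (fun i => if h : i ∈ I then a ⟨i, h⟩ else f ⟨i, h⟩)
      (fun i => if h : i ∈ I then b ⟨i, h⟩ else f ⟨i, h⟩)

/-- The single-site reduced density matrix on the `i`-th tensor factor. -/
def siteMarginal {κ : Type*} [Fintype κ] {n : ℕ}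
    (M : Matrix (Fin n → κ) (Fin n → κ) ℂ) (i : Fin n) : Matrix κ κ ℂ :=
  fun a b => ∑ f : {j : Fin n // j ≠ i} → κ,
    M (fun j => if h : j = i then a else f ⟨j, h⟩)
      (fun j => if h : j = i then b else f ⟨j, h⟩)

/-- The i.i.d. product state `ρ^{⊗ι}` on the tensor factors indexed by `ι`. -/
def iidOn {κ : Type*} (ι : Type*) [Fintype ι] (ρ : Matrix κ κ ℂ) :
    Matrix (ι → κ) (ι → κ) ℂ :=
  fun a b => ∏ i, ρ (a i) (b i)

/-- The product state `φ 0 ⊗ φ 1 ⊗ ⋯`. -/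
def prodState {κ : Type*} {ι : Type*} [Fintype ι] (φ : ι → Matrix κ κ ℂ) :
    Matrix (ι → κ) (ι → κ) ℂ :=
  fun a b => ∏ i, φ i (a i) (b i)

/-- The quantum Wasserstein norm of order 1 of a difference of states:
the minimum of `Σ cᵢ` over decompositions `X = Σ cᵢ (τ⁽ⁱ⁾ − η⁽ⁱ⁾)` with `cᵢ ≥ 0`,
`τ⁽ⁱ⁾, η⁽ⁱ⁾` states with equal partial traces over the `i`-th factor. -/
def W1 {κ : Type*} [Fintype κ] [DecidableEq κ] {n : ℕ}
    (X : Matrix (Fin n → κ) (Fin n → κ) ℂ) : ℝ :=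
  sInf { w : ℝ |
    ∃ (c : Fin n → ℝ) (τ η : Fin n → Matrix (Fin n → κ) (Fin n → κ) ℂ),
      (∀ i, 0 ≤ c i) ∧ (∀ i, IsState (τ i)) ∧ (∀ i, IsState (η i)) ∧
      (∀ i, marginal (τ i) ({i}ᶜ : Finset (Fin n)) = marginal (η i) ({i}ᶜ : Finset (Fin n))) ∧
      X = ∑ i, c i • (τ i - η i) ∧ w = ∑ i, c i }

/-- The local variation norm. -/
def LV {κ : Type*} [Fintype κ] [DecidableEq κ] {n : ℕ}
    (X : Matrix (Fin n → κ) (Fin n → κ) ℂ) : ℝ :=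
  (1/2) * ∑ k ∈ Finset.Icc 1 n, ((2:ℝ)^k)⁻¹ *
    (((n.choose k : ℝ))⁻¹ *
      ∑ I ∈ Finset.powersetCard k (Finset.univ : Finset (Fin n)),
        traceNorm (marginal X I))


/-- The action of the permutation unitary `U_π` on an operator of `H^{⊗n}`:
`(U_π M U_π†)`. -/
def permAction {κ : Type*} {n : ℕ} (π : Equiv.Perm (Fin n))
    (M : Matrix (Fin n → κ) (Fin n → κ) ℂ) : Matrix (Fin n → κ) (Fin n → κ) ℂ :=
  fun a b => M (fun i => a (π i)) (fun i => b (π i))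

/-- The locally defective state `ρ^{⊗(n−k)} ⊗ ω` on `H^{⊗n}`. -/
def defectState {κ : Type*} [Fintype κ] (n k : ℕ) (hkn : k ≤ n)
    (ρ : Matrix κ κ ℂ) (ω : Matrix (Fin k → κ) (Fin k → κ) ℂ) :
    Matrix (Fin n → κ) (Fin n → κ) ℂ :=
  fun a b =>
    (∏ i : Fin (n - k),
        ρ (a (Fin.castLE (Nat.sub_le n k) i)) (b (Fin.castLE (Nat.sub_le n k) i))) *
      ω (fun j => a ⟨n - k + j.val, by have := j.isLt; omega⟩)
        (fun j => b ⟨n - k + j.val, by have := j.isLt; omega⟩)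

/-!
Let `σ_j` be `ρ^{⊗(n−k)} ⊗ ω` with its first `j` defective factors traced out and replaced by `ρ`,
so that `σ_0 = ρ^{⊗(n−k)} ⊗ ω` and `σ_k = ρ^{⊗n}`; the latter because an operator unchanged by
replacing any single factor with `ρ` is a multiple of `ρ^{⊗n}`. Consecutive `σ_j` have the same
marginal off one site, so the symmetrised difference telescopes into `n! · k` moves of weight
`1/n!`. The definition of `W1` allows one move per site, but moves at a common site can be merged
by averaging, as the constraints are convex; this gives a decomposition of total weight `k`.
-/

open Function

section Sites

variable {ι κ : Type*} [DecidableEq ι] [Fintype κ]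

/-- `Tr_i M ⊗ 1`, kept on the full space: it ignores the `i`-th coordinate of its indices. -/
def traceSite (M : Matrix (ι → κ) (ι → κ) ℂ) (i : ι) : Matrix (ι → κ) (ι → κ) ℂ :=
  fun a b => ∑ x, M (update a i x) (update b i x)

/-- `Tr_i M ⊗ ρ`, with `ρ` in the `i`-th factor. -/
def replaceSite (ρ : Matrix κ κ ℂ) (M : Matrix (ι → κ) (ι → κ) ℂ) (i : ι) :
    Matrix (ι → κ) (ι → κ) ℂ :=
  fun a b => ρ (a i) (b i) * traceSite M i a b

@[simp]
lemma traceSite_update_update (M : Matrix (ι → κ) (ι → κ) ℂ) (i : ι) (a b : ι → κ) (x y : κ) :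
    traceSite M i (update a i x) (update b i y) = traceSite M i a b := by
  simp [traceSite]

lemma traceSite_replaceSite (ρ : Matrix κ κ ℂ) (M : Matrix (ι → κ) (ι → κ) ℂ) (i : ι) :
    traceSite (replaceSite ρ M i) i = ρ.trace • traceSite M i := by
  ext a b
  simp [traceSite, replaceSite, Matrix.trace, Finset.sum_mul]

lemma replaceSite_replaceSite_self {ρ : Matrix κ κ ℂ} (hρ : ρ.trace = 1)
    (M : Matrix (ι → κ) (ι → κ) ℂ) (i : ι) :
    replaceSite ρ (replaceSite ρ M i) i = replaceSite ρ M i := by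
  ext a b
  rw [replaceSite, traceSite_replaceSite, hρ, one_smul]
  rfl

lemma replaceSite_comm (ρ : Matrix κ κ ℂ) (M : Matrix (ι → κ) (ι → κ) ℂ) (i j : ι) :
    replaceSite ρ (replaceSite ρ M i) j = replaceSite ρ (replaceSite ρ M j) i := by
  rcases eq_or_ne i j with rfl | hij
  · rfl
  ext a b
  simp only [replaceSite, traceSite, update_of_ne hij, update_of_ne hij.symm, Finset.mul_sum]
  rw [Finset.sum_comm]
  refine Finset.sum_congr rfl fun x _ => Finset.sum_congr rfl fun y _ => ?_
  rw [update_comm hij, update_comm hij]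
  ring

lemma posSemidef_traceSite {M : Matrix (ι → κ) (ι → κ) ℂ} (hM : M.PosSemidef) (i : ι) :
    (traceSite M i).PosSemidef := by
  have : traceSite M i = ∑ x, M.submatrix (update · i x) (update · i x) := by
    ext a b
    simp [traceSite, Matrix.sum_apply]
  rw [this]
  exact posSemidef_sum _ fun x _ => hM.submatrix _

lemma posSemidef_replaceSite {ρ : Matrix κ κ ℂ} (hρ : ρ.PosSemidef)
    {M : Matrix (ι → κ) (ι → κ) ℂ} (hM : M.PosSemidef) (i : ι) :
    (replaceSite ρ M i).PosSemidef :=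
  show (ρ.submatrix (· i) (· i) ⊙ traceSite M i).PosSemidef from
    (hρ.submatrix _).hadamard (posSemidef_traceSite hM i)

lemma traceSite_sum_smul {θ : Type*} (s : Finset θ) (w : θ → ℝ)
    (τ : θ → Matrix (ι → κ) (ι → κ) ℂ) (i : ι) :
    traceSite (∑ q ∈ s, w q • τ q) i = ∑ q ∈ s, w q • traceSite (τ q) i := by
  ext a b
  simp only [traceSite, Matrix.sum_apply, Matrix.smul_apply, Finset.smul_sum]
  exact Finset.sum_comm

variable [Fintype ι]

lemma trace_replaceSite (ρ : Matrix κ κ ℂ) (M : Matrix (ι → κ) (ι → κ) ℂ) (i : ι) :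
    (replaceSite ρ M i).trace = ρ.trace * M.trace := by
  -- `(a, x) ↦ (update a i x, a i)` is an involution exchanging the two summation orders
  let swap : (ι → κ) × κ → (ι → κ) × κ := fun p => (update p.1 i p.2, p.1 i)
  have hswap : Involutive swap := fun p => by simp [swap]
  have := Equiv.sum_comp (hswap.toPerm swap)
    fun p => ρ (p.1 i) (p.1 i) * M (update p.1 i p.2) (update p.1 i p.2)
  simp only [Involutive.coe_toPerm, swap, update_self, update_idem, update_eq_self,
    Fintype.sum_prod_type] at this
  simp only [Matrix.trace, Matrix.diag, replaceSite, traceSite, Finset.mul_sum, Finset.sum_mul]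
  rw [← this, Finset.sum_comm]

lemma isState_replaceSite {ρ : Matrix κ κ ℂ} (hρ : IsState ρ) {M : Matrix (ι → κ) (ι → κ) ℂ}
    (hM : IsState M) (i : ι) : IsState (replaceSite ρ M i) :=
  ⟨posSemidef_replaceSite hρ.1 hM.1 i, by rw [trace_replaceSite, hρ.2, hM.2, one_mul]⟩

end Sites

section Replacements

variable {ι κ : Type*} [DecidableEq ι] [Fintype κ] {ρ : Matrix κ κ ℂ}

lemma replaceSite_foldl_replaceSite (ρ : Matrix κ κ ℂ) (M : Matrix (ι → κ) (ι → κ) ℂ)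
    (l : List ι) (i : ι) :
    replaceSite ρ (l.foldl (replaceSite ρ) M) i = l.foldl (replaceSite ρ) (replaceSite ρ M i) := by
  induction l generalizing M with
  | nil => rfl
  | cons j l ih => rw [List.foldl_cons, ih, replaceSite_comm, List.foldl_cons]

lemma replaceSite_foldl_replaceSite_of_mem (hρ : ρ.trace = 1) (M : Matrix (ι → κ) (ι → κ) ℂ)
    {l : List ι} {i : ι} (hi : i ∈ l) :
    replaceSite ρ (l.foldl (replaceSite ρ) M) i = l.foldl (replaceSite ρ) M := by
  induction l generalizing M with
  | nil => simp at hi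
  | cons j l ih =>
    rw [List.foldl_cons]
    rcases List.mem_cons.1 hi with rfl | hi
    · rw [replaceSite_foldl_replaceSite, replaceSite_replaceSite_self hρ]
    · exact ih _ hi

lemma mul_prod_eq_mul_prod_of_replaceSite_eq {M : Matrix (ι → κ) (ι → κ) ℂ} {T : Finset ι}
    (hM : ∀ i ∈ T, replaceSite ρ M i = M) {a b a' b' : ι → κ}
    (h : ∀ t ∉ T, a t = a' t ∧ b t = b' t) :
    M a b * ∏ t ∈ T, ρ (a' t) (b' t) = M a' b' * ∏ t ∈ T, ρ (a t) (b t) := by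
  induction T using Finset.induction_on generalizing a b with
  | empty =>
    rw [funext fun t => (h t (Finset.notMem_empty t)).1,
      funext fun t => (h t (Finset.notMem_empty t)).2]
  | insert i T hiT ih =>
    have hT (t) (ht : t ∈ T) : t ≠ i := ne_of_mem_of_not_mem ht hiT
    have hsite (c d : ι → κ) : M c d = ρ (c i) (d i) * traceSite M i c d :=
      (congrFun (congrFun (hM i (Finset.mem_insert_self i T)) c) d).symm
    have hmove : M a b * ρ (a' i) (b' i) =
        M (update a i (a' i)) (update b i (b' i)) * ρ (a i) (b i) := by
      rw [hsite a, hsite (update a i (a' i)), traceSite_update_update]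
      simp only [update_self]
      ring
    have hrest := ih (fun j hj => hM j (Finset.mem_insert_of_mem hj))
      (a := update a i (a' i)) (b := update b i (b' i)) fun t ht => by
        rcases eq_or_ne t i with rfl | hti
        · simp
        · simpa [update_of_ne hti] using h t (by simp [hti, ht])
    have hprod : ∏ t ∈ T, ρ (update a i (a' i) t) (update b i (b' i) t) =
        ∏ t ∈ T, ρ (a t) (b t) :=
      Finset.prod_congr rfl fun t ht => by rw [update_of_ne (hT t ht), update_of_ne (hT t ht)]
    rw [Finset.prod_insert hiT, Finset.prod_insert hiT]
    linear_combination (∏ t ∈ T, ρ (a' t) (b' t)) * hmove + ρ (a i) (b i) * hrest +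
      ρ (a i) (b i) * M a' b' * hprod

variable [Fintype ι]

lemma isState_foldl_replaceSite (hρ : IsState ρ) {M : Matrix (ι → κ) (ι → κ) ℂ} (hM : IsState M)
    (l : List ι) : IsState (l.foldl (replaceSite ρ) M) := by
  induction l generalizing M with
  | nil => exact hM
  | cons j l ih => exact ih (isState_replaceSite hρ hM j)

lemma trace_iidOn (ρ : Matrix κ κ ℂ) : (iidOn ι ρ).trace = ρ.trace ^ Fintype.card ι := by
  simp only [Matrix.trace, Matrix.diag, iidOn]
  rw [← Finset.card_univ, ← Finset.prod_const, Finset.prod_univ_sum, Fintype.piFinset_univ]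

lemma eq_trace_smul_iidOn (hρ : ρ.trace = 1) {M : Matrix (ι → κ) (ι → κ) ℂ}
    (hM : ∀ i, replaceSite ρ M i = M) : M = M.trace • iidOn ι ρ := by
  ext a b
  have hsum := Finset.sum_congr rfl fun a' (_ : a' ∈ Finset.univ) =>
    mul_prod_eq_mul_prod_of_replaceSite_eq (T := Finset.univ) (fun i _ => hM i) (a := a) (b := b)
      (a' := a') (b' := a') (by simp)
  rw [← Finset.mul_sum, ← Finset.sum_mul] at hsum
  have htr := trace_iidOn (ι := ι) ρ
  rw [hρ, one_pow] at htr
  rw [show ∑ a' : ι → κ, ∏ t, ρ (a' t) (a' t) = 1 from htr, mul_one] at hsum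
  rw [hsum]
  rfl

lemma posSemidef_iidOn (hρ : ρ.PosSemidef) : (iidOn ι ρ).PosSemidef := by
  have hpartial (T : Finset ι) :
      (Matrix.of fun a b : ι → κ => ∏ t ∈ T, ρ (a t) (b t)).PosSemidef := by
    induction T using Finset.induction_on with
    | empty => simpa [Matrix.vecMulVec] using posSemidef_vecMulVec_self_star (1 : (ι → κ) → ℂ)
    | insert i T hiT ih =>
      have hinsert : (Matrix.of fun a b : ι → κ => ∏ t ∈ insert i T, ρ (a t) (b t)) =
          ρ.submatrix (· i) (· i) ⊙ Matrix.of fun a b => ∏ t ∈ T, ρ (a t) (b t) := by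
        ext a b
        simp [Finset.prod_insert hiT]
      rw [hinsert]
      exact (hρ.submatrix _).hadamard ih
  exact hpartial Finset.univ

lemma replaceSite_iidOn (hρ : ρ.trace = 1) (i : ι) : replaceSite ρ (iidOn ι ρ) i = iidOn ι ρ := by
  have hsplit (c d : ι → κ) : iidOn ι ρ c d = ρ (c i) (d i) * ∏ t ∈ {i}ᶜ, ρ (c t) (d t) :=
    Fintype.prod_eq_mul_prod_compl i _
  ext a b
  have hrest (x : κ) : ∏ t ∈ {i}ᶜ, ρ (update a i x t) (update b i x t) =
      ∏ t ∈ {i}ᶜ, ρ (a t) (b t) :=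
    Finset.prod_congr rfl fun t ht => by
      rw [update_of_ne (by simpa using ht), update_of_ne (by simpa using ht)]
  simp only [replaceSite, traceSite, hsplit, update_self, hrest, ← Finset.sum_mul]
  rw [show ∑ x, ρ x x = 1 from hρ, one_mul]

end Replacements

lemma IsState.sum_smul {m θ : Type*} [Fintype m] {s : Finset θ} {w : θ → ℝ}
    (hw : ∀ q ∈ s, 0 ≤ w q) (hw1 : ∑ q ∈ s, w q = 1) {τ : θ → Matrix m m ℂ}
    (hτ : ∀ q ∈ s, IsState (τ q)) : IsState (∑ q ∈ s, w q • τ q) := by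
  refine ⟨posSemidef_sum _ fun q hq => (hτ q hq).1.smul (hw q hq), ?_⟩
  calc (∑ q ∈ s, w q • τ q).trace = ∑ q ∈ s, (w q : ℂ) := by
        rw [Matrix.trace_sum]
        exact Finset.sum_congr rfl fun q hq => by
          rw [Matrix.trace_smul, (hτ q hq).2, Complex.real_smul, mul_one]
    _ = 1 := by exact_mod_cast hw1

section Moves

variable {ι κ : Type*} [Fintype ι] [DecidableEq ι] [Fintype κ]

/-- `τ` and `η` are states with the same marginal on all factors but the `i`-th: a move in the
definition of `W1`. -/
def AgreeOffSite (i : ι) (τ η : Matrix (ι → κ) (ι → κ) ℂ) : Prop :=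
  IsState τ ∧ IsState η ∧ traceSite τ i = traceSite η i

lemma agreeOffSite_replaceSite {ρ : Matrix κ κ ℂ} (hρ : IsState ρ)
    {M : Matrix (ι → κ) (ι → κ) ℂ} (hM : IsState M) (i : ι) :
    AgreeOffSite i M (replaceSite ρ M i) :=
  ⟨hM, isState_replaceSite hρ hM i, by rw [traceSite_replaceSite, hρ.2, one_smul]⟩

lemma AgreeOffSite.sum_smul {θ : Type*} {s : Finset θ} {w : θ → ℝ} (hw : ∀ q ∈ s, 0 ≤ w q)
    (hw1 : ∑ q ∈ s, w q = 1) {i : ι} {τ η : θ → Matrix (ι → κ) (ι → κ) ℂ}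
    (h : ∀ q ∈ s, AgreeOffSite i (τ q) (η q)) :
    AgreeOffSite i (∑ q ∈ s, w q • τ q) (∑ q ∈ s, w q • η q) :=
  ⟨IsState.sum_smul hw hw1 fun q hq => (h q hq).1,
    IsState.sum_smul hw hw1 fun q hq => (h q hq).2.1, by
    rw [traceSite_sum_smul, traceSite_sum_smul]
    exact Finset.sum_congr rfl fun q hq => by rw [(h q hq).2.2]⟩

/-- Moves at a common site merge into one, by averaging. -/
lemma AgreeOffSite.exists_sum_smul_sub {σ₀ : Matrix (ι → κ) (ι → κ) ℂ} (hσ₀ : IsState σ₀)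
    {θ : Type*} {s : Finset θ} {c : θ → ℝ} (hc : ∀ q ∈ s, 0 ≤ c q) {i : ι}
    {τ η : θ → Matrix (ι → κ) (ι → κ) ℂ} (h : ∀ q ∈ s, AgreeOffSite i (τ q) (η q)) :
    ∃ τ' η', AgreeOffSite i τ' η' ∧
      ∑ q ∈ s, c q • (τ q - η q) = (∑ q ∈ s, c q) • (τ' - η') := by
  by_cases hC : ∑ q ∈ s, c q = 0
  · refine ⟨σ₀, σ₀, ⟨hσ₀, hσ₀, rfl⟩, ?_⟩
    rw [hC, zero_smul]
    exact Finset.sum_eq_zero fun q hq => by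
      rw [(Finset.sum_eq_zero_iff_of_nonneg hc).1 hC q hq, zero_smul]
  · refine ⟨_, _, AgreeOffSite.sum_smul (w := fun q => c q / ∑ q ∈ s, c q)
      (fun q hq => div_nonneg (hc q hq) (Finset.sum_nonneg hc))
      (by rw [← Finset.sum_div, div_self hC]) h, ?_⟩
    rw [← Finset.sum_sub_distrib, Finset.smul_sum]
    refine Finset.sum_congr rfl fun q _ => ?_
    rw [← smul_sub, smul_smul, mul_div_cancel₀ _ hC]

end Moves

section W1

variable {κ : Type*} [Fintype κ] {n : ℕ}

lemma marginal_compl_singleton_eq_of_traceSite_eq {M N : Matrix (Fin n → κ) (Fin n → κ) ℂ}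
    {i : Fin n} (h : traceSite M i = traceSite N i) :
    marginal M ({i}ᶜ : Finset (Fin n)) = marginal N ({i}ᶜ : Finset (Fin n)) := by
  have : Unique {t : Fin n // t ∉ ({i}ᶜ : Finset (Fin n))} :=
    ⟨⟨⟨i, by simp⟩⟩, fun t => Subtype.ext (by simpa using t.2)⟩
  let extend (a : {t : Fin n // t ∈ ({i}ᶜ : Finset (Fin n))} → κ) (x : κ) : Fin n → κ :=
    fun t => if h : t ∈ ({i}ᶜ : Finset (Fin n)) then a ⟨t, h⟩ else x
  have hmarg (M : Matrix (Fin n → κ) (Fin n → κ) ℂ) (a b) :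
      marginal M ({i}ᶜ : Finset (Fin n)) a b = ∑ x, M (extend a x) (extend b x) := by
    refine Fintype.sum_equiv (Equiv.funUnique _ κ) _ _ fun f => ?_
    congr 1 <;>
    · funext t
      dsimp only [extend]
      split_ifs
      · rfl
      · exact congrArg f (Subsingleton.elim _ _)
  ext a b
  rw [hmarg, hmarg]
  rcases isEmpty_or_nonempty κ with hκ | ⟨⟨x₀⟩⟩
  · simp
  · have hext (a) (x : κ) : extend a x = update (extend a x₀) i x := by
      funext t
      rcases eq_or_ne t i with rfl | hti
      · simp [extend]
      · simp [extend, hti]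
    have htrace (M : Matrix (Fin n → κ) (Fin n → κ) ℂ) :
        ∑ x, M (extend a x) (extend b x) = traceSite M i (extend a x₀) (extend b x₀) :=
      Finset.sum_congr rfl fun x _ => by rw [hext a x, hext b x]
    rw [htrace, htrace, h]

/-- Unlike in the definition of `W1`, any number of moves may act on the same site. -/
lemma W1_le_sum_of_eq_sum_smul_sub [DecidableEq κ] {X σ₀ : Matrix (Fin n → κ) (Fin n → κ) ℂ}
    (hσ₀ : IsState σ₀)
    {θ : Type*} [Fintype θ] (site : θ → Fin n) (c : θ → ℝ)
    (τ η : θ → Matrix (Fin n → κ) (Fin n → κ) ℂ) (hc : ∀ q, 0 ≤ c q)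
    (h : ∀ q, AgreeOffSite (site q) (τ q) (η q)) (hX : X = ∑ q, c q • (τ q - η q)) :
    W1 X ≤ ∑ q, c q := by
  choose τ' η' hagree hsum using fun i : Fin n =>
    AgreeOffSite.exists_sum_smul_sub hσ₀ (s := {q | site q = i}) (fun q _ => hc q)
      (fun q hq => (Finset.mem_filter.1 hq).2 ▸ h q)
  refine csInf_le ⟨0, ?_⟩ ⟨fun i => ∑ q with site q = i, c q, τ', η',
    fun i => Finset.sum_nonneg fun q _ => hc q, fun i => (hagree i).1, fun i => (hagree i).2.1,
    fun i => marginal_compl_singleton_eq_of_traceSite_eq (hagree i).2.2, ?_, ?_⟩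
  · rintro w ⟨c', -, -, hc', -, -, -, -, rfl⟩
    exact Finset.sum_nonneg fun i _ => hc' i
  · rw [hX, ← Finset.sum_fiberwise Finset.univ site]
    exact Finset.sum_congr rfl fun i _ => hsum i
  · exact (Finset.sum_fiberwise _ _ _).symm

end W1

section Permutations

variable {κ : Type*} {n : ℕ}

lemma permAction_sub (π : Equiv.Perm (Fin n)) (M N : Matrix (Fin n → κ) (Fin n → κ) ℂ) :
    permAction π (M - N) = permAction π M - permAction π N :=
  rfl

lemma permAction_sum {θ : Type*} (π : Equiv.Perm (Fin n)) (s : Finset θ)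
    (M : θ → Matrix (Fin n → κ) (Fin n → κ) ℂ) :
    permAction π (∑ q ∈ s, M q) = ∑ q ∈ s, permAction π (M q) := by
  ext a b
  simp [permAction, Matrix.sum_apply]

lemma permAction_iidOn (π : Equiv.Perm (Fin n)) (ρ : Matrix κ κ ℂ) :
    permAction π (iidOn (Fin n) ρ) = iidOn (Fin n) ρ := by
  ext a b
  exact Equiv.prod_comp π fun i => ρ (a i) (b i)

lemma isState_permAction [Fintype κ] (π : Equiv.Perm (Fin n))
    {M : Matrix (Fin n → κ) (Fin n → κ) ℂ} (hM : IsState M) : IsState (permAction π M) := by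
  refine ⟨hM.1.submatrix (· ∘ π), ?_⟩
  rw [← hM.2]
  exact Equiv.sum_comp (Equiv.arrowCongr π.symm (Equiv.refl κ)) fun a => M a a

lemma traceSite_permAction [Fintype κ] (π : Equiv.Perm (Fin n))
    (M : Matrix (Fin n → κ) (Fin n → κ) ℂ) (i : Fin n) :
    traceSite (permAction π M) (π i) = permAction π (traceSite M i) := by
  ext a b
  change ∑ x, M (update a (π i) x ∘ π) (update b (π i) x ∘ π) =
    ∑ x, M (update (a ∘ π) i x) (update (b ∘ π) i x)
  simp only [update_comp_eq_of_injective _ π.injective]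

lemma AgreeOffSite.permAction [Fintype κ] {i : Fin n} {τ η : Matrix (Fin n → κ) (Fin n → κ) ℂ}
    (h : AgreeOffSite i τ η) (π : Equiv.Perm (Fin n)) :
    AgreeOffSite (π i) (permAction π τ) (permAction π η) :=
  ⟨isState_permAction π h.1, isState_permAction π h.2.1, by
    rw [traceSite_permAction, traceSite_permAction, h.2.2]⟩

/-- Each prefix of `l` gives a state, and consecutive ones differ by one move. -/
lemma W1_symmetrised_sub_foldl_replaceSite_le [Fintype κ] [DecidableEq κ] {ρ : Matrix κ κ ℂ}
    (hρ : IsState ρ) {M : Matrix (Fin n → κ) (Fin n → κ) ℂ} (hM : IsState M)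
    (l : List (Fin n)) :
    W1 (((n.factorial : ℂ))⁻¹ •
        ∑ π : Equiv.Perm (Fin n), permAction π (M - l.foldl (replaceSite ρ) M)) ≤ l.length := by
  let σ (j : ℕ) := (l.take j).foldl (replaceSite ρ) M
  have hmove (j : Fin l.length) : AgreeOffSite l[j] (σ j) (σ (j + 1)) := by
    have hσ : σ (j + 1) = replaceSite ρ (σ j) l[j] := by
      simp only [σ, List.take_add_one, List.getElem?_eq_getElem j.2, Option.toList_some,
        List.foldl_append, List.foldl_cons, List.foldl_nil, Fin.getElem_fin]
    rw [hσ]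
    exact agreeOffSite_replaceSite hρ (isState_foldl_replaceSite hρ hM _) _
  have htel : M - l.foldl (replaceSite ρ) M = ∑ j : Fin l.length, (σ j - σ (j + 1)) := by
    rw [Fin.sum_univ_eq_sum_range (fun j => σ j - σ (j + 1)), Finset.sum_range_sub']
    simp [σ]
  have hweight : ∑ _q : Equiv.Perm (Fin n) × Fin l.length, ((n.factorial : ℝ))⁻¹ = l.length := by
    simp only [Finset.sum_const, Finset.card_univ, Fintype.card_prod, Fintype.card_perm,
      Fintype.card_fin, nsmul_eq_mul, Nat.cast_mul]
    field_simp
  rw [← hweight]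
  refine W1_le_sum_of_eq_sum_smul_sub hM (fun q => q.1 l[q.2]) _
    (fun q => permAction q.1 (σ q.2)) (fun q => permAction q.1 (σ (q.2 + 1)))
    (fun _ => by positivity) (fun q => (hmove q.2).permAction q.1) ?_
  rw [htel, Fintype.sum_prod_type, show ((n.factorial : ℂ))⁻¹ = (((n.factorial : ℝ))⁻¹ : ℝ) by
    push_cast; rfl, Complex.coe_smul]
  simp only [permAction_sum, permAction_sub, Finset.smul_sum]

end Permutations

section DefectState

open scoped Kronecker

variable {κ : Type*} {n k : ℕ}

/-- `Fin n ≃ Fin (n - k) ⊕ Fin k` on configurations: the `n - k` undisturbed factors, then the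
`k` defective ones. -/
def headTailEquiv (hkn : k ≤ n) : (Fin n → κ) ≃ (Fin (n - k) → κ) × (Fin k → κ) :=
  (Equiv.arrowCongr (finCongr (Nat.sub_add_cancel hkn).symm) (Equiv.refl κ)).trans
    (Fin.appendEquiv _ _).symm

def defectSites (hkn : k ≤ n) : List (Fin n) :=
  List.ofFn fun j : Fin k => ⟨n - k + j, by have := j.isLt; omega⟩

variable [Fintype κ]

lemma defectState_eq_submatrix_kronecker (hkn : k ≤ n) (ρ : Matrix κ κ ℂ)
    (ω : Matrix (Fin k → κ) (Fin k → κ) ℂ) :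
    defectState n k hkn ρ ω =
      (iidOn (Fin (n - k)) ρ ⊗ₖ ω).submatrix (headTailEquiv hkn) (headTailEquiv hkn) :=
  rfl

lemma isState_defectState (hkn : k ≤ n) {ρ : Matrix κ κ ℂ} (hρ : IsState ρ)
    {ω : Matrix (Fin k → κ) (Fin k → κ) ℂ} (hω : IsState ω) :
    IsState (defectState n k hkn ρ ω) := by
  rw [defectState_eq_submatrix_kronecker]
  refine ⟨((posSemidef_iidOn hρ.1).kronecker hω.1).submatrix _, ?_⟩
  change ∑ a, (iidOn (Fin (n - k)) ρ ⊗ₖ ω) (headTailEquiv hkn a) (headTailEquiv hkn a) = 1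
  rw [Equiv.sum_comp (headTailEquiv hkn) fun p => (iidOn (Fin (n - k)) ρ ⊗ₖ ω) p p]
  change (iidOn (Fin (n - k)) ρ ⊗ₖ ω).trace = 1
  rw [Matrix.trace_kronecker, trace_iidOn, hρ.2, hω.2, one_pow, one_mul]

lemma replaceSite_defectState_castLE (hkn : k ≤ n) {ρ : Matrix κ κ ℂ} (hρ : ρ.trace = 1)
    (ω : Matrix (Fin k → κ) (Fin k → κ) ℂ) (i : Fin (n - k)) :
    replaceSite ρ (defectState n k hkn ρ ω) (Fin.castLE (Nat.sub_le n k) i) =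
      defectState n k hkn ρ ω := by
  set h := Fin.castLE (Nat.sub_le n k) i
  have hhead (c : Fin n → κ) (x : κ) (j : Fin (n - k)) :
      update c h x (Fin.castLE (Nat.sub_le n k) j) =
        update (fun j => c (Fin.castLE (Nat.sub_le n k) j)) i x j :=
    congrFun (update_comp_eq_of_injective c (Fin.castLE_injective _) i x) j
  have htail (c : Fin n → κ) (x : κ) :
      (fun j : Fin k => update c h x ⟨n - k + j, by have := j.isLt; omega⟩) =
        fun j : Fin k => c ⟨n - k + j, by have := j.isLt; omega⟩ :=
    funext fun j => update_of_ne (Fin.ne_of_val_ne (by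
      have := i.isLt
      simp only [h, Fin.val_castLE]
      omega)) _ _
  ext a b
  have hiid := congrFun (congrFun (replaceSite_iidOn hρ i)
    (fun j => a (Fin.castLE (Nat.sub_le n k) j))) (fun j => b (Fin.castLE (Nat.sub_le n k) j))
  simp only [replaceSite, traceSite, iidOn] at hiid
  simp only [replaceSite, traceSite, defectState, hhead, htail, ← Finset.sum_mul]
  rw [← mul_assoc]
  exact congrArg (· * _) hiid

lemma foldl_replaceSite_defectState (hkn : k ≤ n) {ρ : Matrix κ κ ℂ} (hρ : IsState ρ)
    {ω : Matrix (Fin k → κ) (Fin k → κ) ℂ} (hω : IsState ω) :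
    (defectSites hkn).foldl (replaceSite ρ) (defectState n k hkn ρ ω) = iidOn (Fin n) ρ := by
  set R := (defectSites hkn).foldl (replaceSite ρ) (defectState n k hkn ρ ω)
  have hR : IsState R := isState_foldl_replaceSite hρ (isState_defectState hkn hρ hω) _
  have hsite (i : Fin n) : replaceSite ρ R i = R := by
    by_cases hi : i.1 < n - k
    · rw [replaceSite_foldl_replaceSite, show i = Fin.castLE (Nat.sub_le n k) ⟨i, hi⟩ from rfl,
        replaceSite_defectState_castLE hkn hρ.2]
    · refine replaceSite_foldl_replaceSite_of_mem hρ.2 _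
        (List.mem_ofFn.2 ⟨⟨i - (n - k), by have := i.isLt; omega⟩, Fin.ext ?_⟩)
      simp only
      omega
  rw [eq_trace_smul_iidOn hρ.2 hsite, hR.2, one_smul]

end DefectState

theorem W1_symmetrised_defect_le_general
    {κ : Type*} [Fintype κ] [DecidableEq κ] {n k : ℕ} (hkn : k ≤ n)
    (ρ : Matrix κ κ ℂ) (hρ : IsState ρ)
    (ω : Matrix (Fin k → κ) (Fin k → κ) ℂ) (hω : IsState ω) :
    (1 / (n : ℝ)) *
        W1 (((n.factorial : ℂ))⁻¹ •
            (∑ π : Equiv.Perm (Fin n), permAction π (defectState n k hkn ρ ω))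
          - iidOn (Fin n) ρ)
      ≤ (k : ℝ) / n := by
  have hW := W1_symmetrised_sub_foldl_replaceSite_le hρ (isState_defectState hkn hρ hω)
    (defectSites hkn)
  rw [foldl_replaceSite_defectState hkn hρ hω, defectSites, List.length_ofFn] at hW
  have hiid : ((n.factorial : ℂ))⁻¹ • ∑ _π : Equiv.Perm (Fin n), iidOn (Fin n) ρ =
      iidOn (Fin n) ρ := by
    rw [Finset.sum_const, Finset.card_univ, Fintype.card_perm, Fintype.card_fin,
      ← Nat.cast_smul_eq_nsmul ℂ, smul_smul,
      inv_mul_cancel₀ (by exact_mod_cast n.factorial_ne_zero), one_smul]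
  simp only [permAction_sub, permAction_iidOn, Finset.sum_sub_distrib, smul_sub, hiid] at hW
  rw [one_div_mul_eq_div]
  gcongr

/-- The symmetrised locally-defective state
`(1/n!) Σ_{π ∈ Sₙ} U_π (ρ^{⊗(n−k)} ⊗ ω) U_π†` is at normalised `W1` distance at most
`k/n` from `ρ^{⊗n}`. -/
theorem W1_symmetrised_defect_le
    {κ : Type*} [Fintype κ] [DecidableEq κ] {n k : ℕ} (hn : 1 ≤ n) (hkn : k ≤ n)
    (ρ : Matrix κ κ ℂ) (hρ : IsState ρ)
    (ω : Matrix (Fin k → κ) (Fin k → κ) ℂ) (hω : IsState ω) :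
    (1 / (n : ℝ)) *
        W1 (((n.factorial : ℂ))⁻¹ •
            (∑ π : Equiv.Perm (Fin n), permAction π (defectState n k hkn ρ ω))
          - iidOn (Fin n) ρ)
      ≤ (k : ℝ) / n :=
  W1_symmetrised_defect_le_general hkn ρ hρ ω hω

end AlmostIID
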